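/- Tame isomorphisms preserve the characteristic algebra ideal membership: if φ : (A₁, ∂₁) → (A₂, ∂₂) is a graded chain algebra isomorphism between DGAs with generating sets {aᵢ¹} and {aᵢ²}, then φ maps the two-sided ideal I₁ generated by {∂₁ aᵢ¹} onto the two-sided ideal I₂ generated by {∂₂ aᵢ²}, and hence induces an algebra isomorphism C(A₁) ≅ C(A₂) of characteristic algebras. -/

import Mathlib

/- Free unital associative ℤ-algebra on a type `X` of generators,
realized as the monoid algebra of the free monoid on `X`. -/
noncomputable section

abbrev FAlg (X : Type) : Type := MonoidAlgebra ℤ (FreeMonoid X)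

/-- The generator `x` as an element of the free algebra. -/
def fgen {X : Type} (x : X) : FAlg X :=
  MonoidAlgebra.of ℤ (FreeMonoid X) (FreeMonoid.of x)

/-- Degree of a word, given degrees of the generators. -/
def wdeg {X : Type} (deg : X → ℤ) (w : FreeMonoid X) : ℤ :=
  ((FreeMonoid.toList w).map deg).sum

/-- An element is homogeneous of degree `d` if every word in its support has degree `d`. -/
def Homog {X : Type} (deg : X → ℤ) (d : ℤ) (a : FAlg X) : Prop :=
  ∀ w ∈ a.coeff.support, wdeg deg w = d

/-- The sign `(-1)^d` for an integer degree `d`. -/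
def sgn (d : ℤ) : ℤ := (((-1 : ℤˣ) ^ d : ℤˣ) : ℤ)

/-- The signed Leibniz rule `∂(vw) = (∂v)w + (-1)^(deg v) v (∂w)` for homogeneous `v`. -/
def IsLeibniz {X : Type} (deg : X → ℤ) (D : FAlg X →ₗ[ℤ] FAlg X) : Prop :=
  ∀ (d : ℤ) (v w : FAlg X), Homog deg d v →
    D (v * w) = D v * w + sgn d • (v * D w)

/-- `D` has degree `-1`: it sends homogeneous elements of degree `d` to degree `d - 1`. -/
def LowersDeg {X : Type} (deg : X → ℤ) (D : FAlg X →ₗ[ℤ] FAlg X) : Prop :=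
  ∀ (d : ℤ) (v : FAlg X), Homog deg d v → Homog deg (d - 1) (D v)

/-- A differential graded algebra: a free graded ℤ-algebra on finitely many
generators with a degree `-1` differential satisfying the signed Leibniz rule
and `∂ ∘ ∂ = 0`. -/
structure DGA where
  n : ℕ
  deg : Fin n → ℤ
  D : FAlg (Fin n) →ₗ[ℤ] FAlg (Fin n)
  leibniz : IsLeibniz deg D
  lowers : LowersDeg deg D
  dsq : ∀ a, D (D a) = 0

/-- An elementary isomorphism: a graded chain algebra map sending one generator
`aᵢ` to `α aᵢ + v` (`α` a unit) and fixing all other generators. -/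
def IsElementary (A B : DGA) (φ : FAlg (Fin A.n) →ₐ[ℤ] FAlg (Fin B.n)) : Prop :=
  ∃ hn : A.n = B.n,
    (∀ (d : ℤ) (v : FAlg (Fin A.n)), Homog A.deg d v → Homog B.deg d (φ v)) ∧
    (∀ a, φ (A.D a) = B.D (φ a)) ∧
    ∃ i : Fin A.n,
      (∃ (α : (FAlg (Fin B.n))ˣ) (v : FAlg (Fin B.n)),
        φ (fgen i) = (α : FAlg (Fin B.n)) * fgen (Fin.cast hn i) + v) ∧
      ∀ j : Fin A.n, j ≠ i → φ (fgen j) = fgen (Fin.cast hn j)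

def ElemRel (A B : DGA) : Prop := ∃ φ, IsElementary A B φ

/-- A tame isomorphism is a finite composition of elementary isomorphisms. -/
def TameIso : DGA → DGA → Prop := Relation.ReflTransGen ElemRel

def stabEmbFin (A B : DGA) (hn : B.n = A.n + 2) : Fin A.n → Fin B.n :=
  fun j => Fin.cast hn.symm (Fin.castAdd 2 j)

/-- The inclusion of the free algebra induced by the inclusion of generators. -/
def stabMap (A B : DGA) (hn : B.n = A.n + 2) : FAlg (Fin A.n) → FAlg (Fin B.n) :=
  MonoidAlgebra.mapDomain (⇑(FreeMonoid.map (stabEmbFin A B hn)))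

def stabE1 (A B : DGA) (hn : B.n = A.n + 2) : Fin B.n :=
  Fin.cast hn.symm (⟨A.n, by omega⟩ : Fin (A.n + 2))

def stabE2 (A B : DGA) (hn : B.n = A.n + 2) : Fin B.n :=
  Fin.cast hn.symm (⟨A.n + 1, by omega⟩ : Fin (A.n + 2))

/-- `B` is the degree-`i` algebraic stabilization of `A`: it is obtained by
adjoining two new free generators `e₁, e₂` with `deg e₁ = i + 1`, `deg e₂ = i`,
`∂e₁ = e₂`, `∂e₂ = 0`, the differential extending that of `A`. -/
def IsStabilizationWith (A : DGA) (i : ℤ) (B : DGA) (hn : B.n = A.n + 2) : Prop :=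
  (∀ j, B.deg (stabEmbFin A B hn j) = A.deg j) ∧
  B.deg (stabE1 A B hn) = i + 1 ∧
  B.deg (stabE2 A B hn) = i ∧
  (∀ a, B.D (stabMap A B hn a) = stabMap A B hn (A.D a)) ∧
  B.D (fgen (stabE1 A B hn)) = fgen (stabE2 A B hn) ∧
  B.D (fgen (stabE2 A B hn)) = 0

def IsStabilization (A : DGA) (i : ℤ) (B : DGA) : Prop :=
  ∃ hn : B.n = A.n + 2, IsStabilizationWith A i B hn

/-- `B` is obtained from `A` by finitely many algebraic stabilizations. -/
def StabChain : DGA → DGA → Prop :=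
  Relation.ReflTransGen (fun P Q => ∃ i : ℤ, IsStabilization P i Q)

/-- Two DGAs are stably tame isomorphic if after finitely many stabilizations
of each they become tame isomorphic. -/
def StableTameIso (A B : DGA) : Prop :=
  ∃ A' B', StabChain A A' ∧ StabChain B B' ∧ TameIso A' B'

/-- The relation whose `RingQuot` is the quotient of `A` by the two-sided ideal
generated by the differentials of the generators: the characteristic algebra. -/
def charRel (A : DGA) (a b : FAlg (Fin A.n)) : Prop :=
  b = 0 ∧ ∃ i : Fin A.n, a = A.D (fgen i)

/-- The characteristic algebra `C(A) = A / I`, `I` the two-sided ideal generated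
by the `∂aᵢ`. -/
abbrev CharAlg (A : DGA) : Type := RingQuot (charRel A)

/-- The characteristic algebra with `d` extra free generators adjoined (and no
new relations): the free algebra on `A.n + d` generators modulo the two-sided
ideal generated by the (images of the) differentials of the original generators. -/
def charExtRel (A : DGA) (d : ℕ) (a b : FAlg (Fin (A.n + d))) : Prop :=
  b = 0 ∧ ∃ i : Fin A.n,
    a = MonoidAlgebra.mapDomain (⇑(FreeMonoid.map (Fin.castAdd d))) (A.D (fgen i))

abbrev CharExtAlg (A : DGA) (d : ℕ) : Type := RingQuot (charExtRel A d)

/-! By the Leibniz rule, `∂` of any word `x₁ ⋯ xₖ` is a sum of terms `u (∂xⱼ) v`, so the ideal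
`I` generated by the differentials of the generators contains the whole image of `∂`. A chain
isomorphism `φ` therefore sends each generator `∂₁aᵢ` of `I₁` to `∂₂(φ aᵢ) ∈ I₂`, and `φ⁻¹`
does the same in the other direction; hence `φ(I₁) = I₂` and `φ` descends to the quotients. -/

theorem homog_one {X : Type} (deg : X → ℤ) : Homog deg 0 (1 : FAlg X) := by
  intro w hw
  obtain rfl : w = 1 := by simpa using Finsupp.support_single_subset hw
  rfl

theorem homog_fgen {X : Type} (deg : X → ℤ) (x : X) : Homog deg (deg x) (fgen x) := by
  intro w hw
  obtain rfl : w = FreeMonoid.of x := by simpa using Finsupp.support_single_subset hw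
  simp [wdeg]

namespace IsLeibniz

variable {X : Type} {deg : X → ℤ} {D : FAlg X →ₗ[ℤ] FAlg X}

theorem map_one (hD : IsLeibniz deg D) : D 1 = 0 := by
  simpa [sgn] using hD 0 1 1 (homog_one deg)

theorem map_mem_span (hD : IsLeibniz deg D) (a : FAlg X) :
    D a ∈ TwoSidedIdeal.span {b | ∃ x, b = D (fgen x)} := by
  set I := TwoSidedIdeal.span {b | ∃ x, b = D (fgen x)}
  have word_mem : ∀ w : FreeMonoid X, D (MonoidAlgebra.of ℤ _ w) ∈ I := by
    intro w
    induction w using FreeMonoid.inductionOn' with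
    | one => show D 1 ∈ I; rw [hD.map_one]; exact I.zero_mem
    | of_mul x w ih =>
      rw [map_mul, show MonoidAlgebra.of ℤ _ (FreeMonoid.of x) = fgen x from rfl,
        hD _ _ _ (homog_fgen deg x)]
      exact add_mem (I.mul_mem_right _ _ (TwoSidedIdeal.subset_span ⟨x, rfl⟩))
        (zsmul_mem (I.mul_mem_left _ _ ih) _)
  induction a using MonoidAlgebra.induction_linear with
  | zero => simp
  | add f g hf hg => simpa using add_mem hf hg
  | single w c =>
    rw [← mul_one c, ← MonoidAlgebra.smul_single', map_smul]
    exact zsmul_mem (word_mem w) c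

end IsLeibniz

namespace TwoSidedIdeal

variable {R S : Type*} [Ring R] [Ring S]

theorem map_mem_span_of_image_subset {f : R →+* S} {s : Set R} {t : Set S}
    (h : f '' s ⊆ span t) {x : R} (hx : x ∈ span s) : f x ∈ span t :=
  (mem_comap f).1 (span_le.2 (fun y hy => (mem_comap f).2 (h ⟨y, hy, rfl⟩)) hx)

end TwoSidedIdeal

def RingQuot.ringEquivOfCompat {R S : Type*} [Semiring R] [Semiring S]
    {r : R → R → Prop} {s : S → S → Prop} (e : R ≃+* S)
    (hr : ∀ ⦃a b⦄, r a b → mkRingHom s (e a) = mkRingHom s (e b))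
    (hs : ∀ ⦃a b⦄, s a b → mkRingHom r (e.symm a) = mkRingHom r (e.symm b)) :
    RingQuot r ≃+* RingQuot s :=
  RingEquiv.ofRingHom (lift ⟨(mkRingHom s).comp e.toRingHom, hr⟩)
    (lift ⟨(mkRingHom r).comp e.symm.toRingHom, hs⟩)
    (ringQuot_ext _ _ (RingHom.ext fun b => by simp [lift_mkRingHom_apply]))
    (ringQuot_ext _ _ (RingHom.ext fun a => by simp [lift_mkRingHom_apply]))

theorem RingQuot.ringEquivOfCompat_mkRingHom {R S : Type*} [Semiring R] [Semiring S]
    {r : R → R → Prop} {s : S → S → Prop} (e : R ≃+* S)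
    (hr : ∀ ⦃a b⦄, r a b → mkRingHom s (e a) = mkRingHom s (e b))
    (hs : ∀ ⦃a b⦄, s a b → mkRingHom r (e.symm a) = mkRingHom r (e.symm b)) (a : R) :
    ringEquivOfCompat e hr hs (mkRingHom r a) = mkRingHom s (e a) :=
  lift_mkRingHom_apply _ hr a

namespace DGA

variable (A B : DGA)

def diffIdeal : TwoSidedIdeal (FAlg (Fin A.n)) :=
  TwoSidedIdeal.span {a | ∃ i, a = A.D (fgen i)}

theorem D_mem_diffIdeal (a : FAlg (Fin A.n)) : A.D a ∈ A.diffIdeal :=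
  A.leibniz.map_mem_span a

variable {A B}

theorem map_mem_diffIdeal {f : FAlg (Fin A.n) →+* FAlg (Fin B.n)}
    (hf : ∀ a, f (A.D a) = B.D (f a)) {x : FAlg (Fin A.n)} (hx : x ∈ A.diffIdeal) :
    f x ∈ B.diffIdeal :=
  TwoSidedIdeal.map_mem_span_of_image_subset
    (by rintro _ ⟨_, ⟨i, rfl⟩, rfl⟩; rw [hf]; exact B.D_mem_diffIdeal _) hx

theorem mkRingHom_charRel_eq_zero {x : FAlg (Fin A.n)} (hx : x ∈ A.diffIdeal) :
    RingQuot.mkRingHom (charRel A) x = 0 :=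
  suffices A.diffIdeal ≤ TwoSidedIdeal.ker (RingQuot.mkRingHom (charRel A)) from
    (TwoSidedIdeal.mem_ker _).1 (this hx)
  TwoSidedIdeal.span_le.2 fun _ ⟨i, hi⟩ => (TwoSidedIdeal.mem_ker _).2 <|
    (RingQuot.mkRingHom_rel (show charRel A _ 0 from ⟨rfl, i, hi⟩)).trans (map_zero _)

theorem mkRingHom_charRel_map {f : FAlg (Fin A.n) →+* FAlg (Fin B.n)}
    (hf : ∀ a, f (A.D a) = B.D (f a)) ⦃a b : FAlg (Fin A.n)⦄ (hab : charRel A a b) :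
    RingQuot.mkRingHom (charRel B) (f a) = RingQuot.mkRingHom (charRel B) (f b) := by
  obtain ⟨rfl, i, rfl⟩ := hab
  rw [map_zero, map_zero, hf]
  exact mkRingHom_charRel_eq_zero (B.D_mem_diffIdeal _)

end DGA

theorem chain_iso_char_iso_general (A B : DGA)
    (φ : FAlg (Fin A.n) ≃ₐ[ℤ] FAlg (Fin B.n))
    (hchain : ∀ a, φ (A.D a) = B.D (φ a)) :
    (∀ x ∈ TwoSidedIdeal.span {a : FAlg (Fin A.n) | ∃ i, a = A.D (fgen i)},
        φ x ∈ TwoSidedIdeal.span {b : FAlg (Fin B.n) | ∃ i, b = B.D (fgen i)}) ∧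
    (∀ y ∈ TwoSidedIdeal.span {b : FAlg (Fin B.n) | ∃ i, b = B.D (fgen i)},
        φ.symm y ∈ TwoSidedIdeal.span {a : FAlg (Fin A.n) | ∃ i, a = A.D (fgen i)}) ∧
    ∃ e : CharAlg A ≃+* CharAlg B,
      ∀ a, e (RingQuot.mkRingHom (charRel A) a)
            = RingQuot.mkRingHom (charRel B) (φ a) := by
  have hchain_symm : ∀ b, φ.symm (B.D b) = A.D (φ.symm b) :=
    Function.Semiconj.inverse_left hchain φ.left_inv φ.right_inv
  let f : FAlg (Fin A.n) →+* FAlg (Fin B.n) := φ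
  let g : FAlg (Fin B.n) →+* FAlg (Fin A.n) := φ.symm
  refine ⟨fun x => DGA.map_mem_diffIdeal (f := f) hchain,
    fun y => DGA.map_mem_diffIdeal (f := g) hchain_symm, ?_⟩
  exact ⟨RingQuot.ringEquivOfCompat φ.toRingEquiv (DGA.mkRingHom_charRel_map (f := f) hchain)
      (DGA.mkRingHom_charRel_map (f := g) hchain_symm),
    RingQuot.ringEquivOfCompat_mkRingHom _ _ _⟩

/-- a graded chain algebra isomorphism `φ : (A, ∂₁) → (B, ∂₂)`
maps the two-sided ideal `I₁` generated by the `∂₁ aᵢ` onto the two-sided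
ideal `I₂` generated by the `∂₂ aᵢ`, and hence induces an isomorphism
`C(A) ≅ C(B)` of characteristic algebras. -/
theorem chain_iso_char_iso (A B : DGA)
    (φ : FAlg (Fin A.n) ≃ₐ[ℤ] FAlg (Fin B.n))
    (hgr : ∀ (d : ℤ) (v : FAlg (Fin A.n)), Homog A.deg d v → Homog B.deg d (φ v))
    (hchain : ∀ a, φ (A.D a) = B.D (φ a)) :
    (∀ x ∈ TwoSidedIdeal.span {a : FAlg (Fin A.n) | ∃ i, a = A.D (fgen i)},
        φ x ∈ TwoSidedIdeal.span {b : FAlg (Fin B.n) | ∃ i, b = B.D (fgen i)}) ∧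
    (∀ y ∈ TwoSidedIdeal.span {b : FAlg (Fin B.n) | ∃ i, b = B.D (fgen i)},
        φ.symm y ∈ TwoSidedIdeal.span {a : FAlg (Fin A.n) | ∃ i, a = A.D (fgen i)}) ∧
    ∃ e : CharAlg A ≃+* CharAlg B,
      ∀ a, e (RingQuot.mkRingHom (charRel A) a)
            = RingQuot.mkRingHom (charRel B) (φ a) :=
  chain_iso_char_iso_general A B φ hchain
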